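/- Let M = [a,b) and N = [c,d) be interval modules with 0 ≤ a ≤ c < d ≤ b (the support of N contained in that of M). Then S_{M,N} = [c−a, d−a) and S_{N,M} = [b−d, b−c). -/

import Mathlib

open scoped NNReal

/-- A persistence module: a functor from `[0,∞)` to real vector spaces. -/
structure PM where
  V : ℝ≥0 → Type
  [grp : ∀ x, AddCommGroup (V x)]
  [mod : ∀ x, Module ℝ (V x)]
  map : ∀ {x y : ℝ≥0}, x ≤ y → (V x →ₗ[ℝ] V y)
  map_id : ∀ x : ℝ≥0, map (le_refl x) = LinearMap.id
  map_comp : ∀ {x y z : ℝ≥0} (h1 : x ≤ y) (h2 : y ≤ z),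
    (map h2).comp (map h1) = map (h1.trans h2)

attribute [instance] PM.grp PM.mod

/-- A morphism of persistence modules. -/
structure PM.Hom (M N : PM) where
  app : ∀ x : ℝ≥0, M.V x →ₗ[ℝ] N.V x
  comm : ∀ {x y : ℝ≥0} (h : x ≤ y), (app y).comp (M.map h) = (N.map h).comp (app x)

/-- The shifted module `M·ε`. -/
def PM.shift (M : PM) (ε : ℝ≥0) : PM where
  V x := M.V (x + ε)
  grp x := inferInstance
  mod x := inferInstance
  map h := M.map (add_le_add h (le_refl ε))
  map_id x := M.map_id (x + ε)
  map_comp h1 h2 := M.map_comp _ _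

noncomputable def intervalSub (α β : ℝ) (x : ℝ≥0) : Submodule ℝ ℝ :=
  if α ≤ (x : ℝ) ∧ (x : ℝ) < β then ⊤ else ⊥

/-- The interval module `[α,β)`. -/
noncomputable def intervalModule (α β : ℝ) : PM where
  V x := ↥(intervalSub α β x)
  grp x := inferInstance
  mod x := inferInstance
  map {x y} h := LinearMap.codRestrict _
      ((if α ≤ (x : ℝ) ∧ (y : ℝ) < β then (1 : ℝ) else 0) • (intervalSub α β x).subtype)
      (by
        intro v
        by_cases hy : α ≤ (y : ℝ) ∧ (y : ℝ) < β
        · simp [intervalSub, hy]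
        · have hc : ¬(α ≤ (x : ℝ) ∧ (y : ℝ) < β) := by
            intro hc
            exact hy ⟨le_trans hc.1 (by exact_mod_cast h), hc.2⟩
          simp only [if_neg hc, zero_smul, LinearMap.zero_apply, Submodule.zero_mem])
  map_id x := by
    ext v
    by_cases hx : α ≤ (x : ℝ) ∧ (x : ℝ) < β
    · simp [hx]
    · have hv : (v : ℝ) = 0 := by
        have h2 := v.2
        simp only [intervalSub, if_neg hx, Submodule.mem_bot] at h2
        exact h2
      simp [hx, hv]
  map_comp {x y z} h1 h2 := by
    ext v
    by_cases hC : α ≤ (x : ℝ) ∧ (z : ℝ) < β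
    · have hA : α ≤ (x : ℝ) ∧ (y : ℝ) < β :=
        ⟨hC.1, lt_of_le_of_lt (by exact_mod_cast h2) hC.2⟩
      have hB : α ≤ (y : ℝ) ∧ (z : ℝ) < β :=
        ⟨le_trans hC.1 (by exact_mod_cast h1), hC.2⟩
      simp [hA, hB, hC]
    · rcases not_and_or.mp hC with hx | hz
      · have hA : ¬(α ≤ (x : ℝ) ∧ (y : ℝ) < β) := fun h => hx h.1
        simp [hA, hC]
        split_ifs <;> simp
      · have hB : ¬(α ≤ (y : ℝ) ∧ (z : ℝ) < β) := fun h => hz h.2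
        simp [hB, hC]

/-- `Hom(M,N) ≠ {0}`: there is a nonzero morphism from `M` to `N`. -/
def HomNeZero (M N : PM) : Prop := ∃ F : PM.Hom M N, ∃ x, F.app x ≠ 0

/-- `S_{M,N} = {x ≥ 0 : Hom(M, N·x) ≠ {0}}`. -/
noncomputable def Sset (M N : PM) : Set ℝ :=
  {x : ℝ | 0 ≤ x ∧ HomNeZero M (N.shift x.toNNReal)}

/-- The canonical morphism `Π_M^{M·τ} : M → M·τ`. -/
def PM.pi (M : PM) (τ : ℝ≥0) : M.Hom (M.shift τ) where
  app x := M.map le_self_add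
  comm {x y} h := by
    show (M.map le_self_add).comp (M.map h) =
      (M.map (add_le_add h (le_refl τ))).comp (M.map le_self_add)
    rw [M.map_comp, M.map_comp]

/-- The pair `(Φ, Ψ)` is an `ε`-interleaving between `M` and `N`:
`(Ψ·ε) ∘ Φ = Π_M^{M·2ε}` and `(Φ·ε) ∘ Ψ = Π_N^{N·2ε}` (expressed pointwise). -/
def IsInterleaving (M N : PM) (ε : ℝ≥0)
    (Φ : M.Hom (N.shift ε)) (Ψ : N.Hom (M.shift ε)) : Prop :=
  (∀ x : ℝ≥0, (Ψ.app (x + ε)).comp (Φ.app x) =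
      M.map (le_self_add.trans le_self_add : x ≤ x + ε + ε)) ∧
  (∀ x : ℝ≥0, (Φ.app (x + ε)).comp (Ψ.app x) =
      N.map (le_self_add.trans le_self_add : x ≤ x + ε + ε))

/-! A nonzero morphism `F : [α,β) → [γ,δ)·ε` is nonzero at some `y` lying in both `[α,β)` and
`[γ-ε,δ-ε)`. If `α < γ-ε`, then `F` vanishes at `α`, and naturality along `α ≤ y`, where the
structure map of `[α,β)` is onto, gives `F y = 0`. If `β < δ-ε`, then `F` vanishes at `β`, and
naturality along `y ≤ β`, where the structure map of `[γ,δ)·ε` is injective, again gives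
`F y = 0`. Conversely, when `γ-ε ≤ α < δ-ε ≤ β`, multiplication by the indicator of `[γ-ε,δ-ε)`
is a morphism, nonzero at `α`. Hence `S_{[α,β),[γ,δ)} = [max(0, γ-α, δ-β), δ-α)`. -/

namespace PM.Hom

variable {M N : PM} (F : M.Hom N) {x y : ℝ≥0}

theorem nontrivial_of_app_ne_zero (hF : F.app x ≠ 0) :
    Nontrivial (M.V x) ∧ Nontrivial (N.V x) := by
  constructor <;> by_contra hn <;> rw [not_nontrivial_iff_subsingleton] at hn <;>
    exact hF (Subsingleton.elim _ _)

theorem app_eq_zero_of_map_surjective (h : x ≤ y) (hs : Function.Surjective (M.map h))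
    (hx : F.app x = 0) : F.app y = 0 := by
  ext w
  obtain ⟨v, rfl⟩ := hs w
  simpa [hx] using LinearMap.congr_fun (F.comm h) v

theorem app_eq_zero_of_map_injective (h : x ≤ y) (hi : Function.Injective (N.map h))
    (hy : F.app y = 0) : F.app x = 0 := by
  ext v
  refine hi ?_
  simpa [hy] using (LinearMap.congr_fun (F.comm h) v).symm

end PM.Hom

section intervalModule

variable {α β : ℝ} {x y : ℝ≥0}

theorem intervalModule_nontrivial_iff :
    Nontrivial ((intervalModule α β).V x) ↔ α ≤ (x : ℝ) ∧ (x : ℝ) < β := by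
  change Nontrivial (intervalSub α β x) ↔ _
  rw [Submodule.nontrivial_iff_ne_bot, intervalSub]
  split_ifs with hx <;> simp [hx]

theorem intervalModule_val_eq_zero (hx : ¬(α ≤ (x : ℝ) ∧ (x : ℝ) < β))
    (v : (intervalModule α β).V x) : v.1 = 0 := by
  simpa [intervalSub, hx] using v.2

theorem intervalModule_subsingleton (hx : ¬(α ≤ (x : ℝ) ∧ (x : ℝ) < β)) :
    Subsingleton ((intervalModule α β).V x) :=
  not_nontrivial_iff_subsingleton.1 (mt intervalModule_nontrivial_iff.1 hx)

theorem intervalModule_map_val (h : x ≤ y) (v : (intervalModule α β).V x) :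
    ((intervalModule α β).map h v).1 = if α ≤ (x : ℝ) ∧ (y : ℝ) < β then v.1 else 0 := by
  change (if _ then (1 : ℝ) else 0) * _ = _
  split_ifs <;> simp

theorem intervalModule_map_bijective (h : x ≤ y) (hx : α ≤ (x : ℝ)) (hy : (y : ℝ) < β) :
    Function.Bijective ((intervalModule α β).map h) := by
  have hxy : α ≤ (x : ℝ) ∧ (y : ℝ) < β := ⟨hx, hy⟩
  refine ⟨fun v w hvw => Subtype.ext ?_, fun w => ⟨⟨w.1, ?_⟩, Subtype.ext ?_⟩⟩
  · simpa [intervalModule_map_val, hxy] using congrArg Subtype.val hvw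
  · rw [intervalSub, if_pos ⟨hx, (NNReal.coe_le_coe.2 h).trans_lt hy⟩]
    trivial
  · exact (intervalModule_map_val h _).trans (if_pos hxy)

end intervalModule

noncomputable def intervalModuleHom (α β γ δ : ℝ) (ε : ℝ≥0) (hγ : γ ≤ α + ε) (hδ : δ ≤ β + ε) :
    (intervalModule α β).Hom ((intervalModule γ δ).shift ε) where
  app x := LinearMap.codRestrict (intervalSub γ δ (x + ε))
    ((if γ ≤ ((x + ε : ℝ≥0) : ℝ) ∧ ((x + ε : ℝ≥0) : ℝ) < δ then (1 : ℝ) else 0) •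
      (intervalSub α β x).subtype)
    (fun v => by
      split_ifs with hx
      · rw [intervalSub, if_pos hx]
        trivial
      · rw [zero_smul]
        exact Submodule.zero_mem _)
  comm {x y} h := by
    ext v
    apply Subtype.ext
    change (if γ ≤ ((y + ε : ℝ≥0) : ℝ) ∧ ((y + ε : ℝ≥0) : ℝ) < δ then (1 : ℝ) else 0) *
        ((if α ≤ (x : ℝ) ∧ (y : ℝ) < β then (1 : ℝ) else 0) * v.1) =
      (if γ ≤ ((x + ε : ℝ≥0) : ℝ) ∧ ((y + ε : ℝ≥0) : ℝ) < δ then (1 : ℝ) else 0) *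
        ((if γ ≤ ((x + ε : ℝ≥0) : ℝ) ∧ ((x + ε : ℝ≥0) : ℝ) < δ then (1 : ℝ) else 0) * v.1)
    by_cases hv : α ≤ (x : ℝ) ∧ (x : ℝ) < β
    · have hxy : (x : ℝ) ≤ y := h
      have hγx : γ ≤ x + ε := by linarith
      push_cast
      by_cases hyδ : y + ε < δ
      · have hyβ : (y : ℝ) < β := by linarith
        have hxδ : x + ε < δ := by linarith
        simp [hv.1, hyβ, hγx, hγx.trans (by linarith : (x : ℝ) + ε ≤ y + ε), hyδ, hxδ]
      · simp [hyδ]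
    · simp [intervalModule_val_eq_zero hv v]

section intervalModuleHom

variable {α β γ δ : ℝ} {ε : ℝ≥0}

theorem intervalModuleHom_app_val (hγ : γ ≤ α + ε) (hδ : δ ≤ β + ε) (x : ℝ≥0)
    (v : (intervalModule α β).V x) :
    ((intervalModuleHom α β γ δ ε hγ hδ).app x v).1 =
      if γ ≤ ((x + ε : ℝ≥0) : ℝ) ∧ ((x + ε : ℝ≥0) : ℝ) < δ then v.1 else 0 := by
  change (if _ then (1 : ℝ) else 0) * v.1 = _
  split_ifs <;> simp

theorem homNeZero_intervalModule_shift (hα : 0 ≤ α) (hγ : γ ≤ α + ε) (hαδ : α + ε < δ)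
    (hδ : δ ≤ β + ε) : HomNeZero (intervalModule α β) ((intervalModule γ δ).shift ε) := by
  set x := α.toNNReal
  have hx : (x : ℝ) = α := Real.coe_toNNReal α hα
  have : Nontrivial ((intervalModule α β).V x) :=
    intervalModule_nontrivial_iff.2 ⟨hx.ge, by linarith⟩
  obtain ⟨v, hv⟩ := exists_ne (0 : (intervalModule α β).V x)
  refine ⟨intervalModuleHom α β γ δ ε hγ hδ, x, fun h0 => hv (Subtype.ext ?_)⟩
  have hvx := intervalModuleHom_app_val hγ hδ x v
  rw [h0, if_pos (by push_cast; exact ⟨by linarith, by linarith⟩)] at hvx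
  exact hvx.symm

theorem bounds_of_homNeZero_intervalModule_shift (hα : 0 ≤ α)
    (hF : HomNeZero (intervalModule α β) ((intervalModule γ δ).shift ε)) :
    γ ≤ α + ε ∧ α + ε < δ ∧ δ ≤ β + ε := by
  obtain ⟨F, y, hFy⟩ := hF
  obtain ⟨hyM, hyN⟩ := F.nontrivial_of_app_ne_zero hFy
  obtain ⟨hαy, hyβ⟩ := intervalModule_nontrivial_iff.1 hyM
  obtain ⟨hγy, hyδ⟩ := intervalModule_nontrivial_iff.1 hyN
  push_cast at hγy hyδ
  refine ⟨?_, by linarith, ?_⟩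
  · by_contra! hαγ
    set x := α.toNNReal
    have hx : (x : ℝ) = α := Real.coe_toNNReal α hα
    have hxy : x ≤ y := by rw [← NNReal.coe_le_coe, hx]; exact hαy
    have : Subsingleton (((intervalModule γ δ).shift ε).V x) :=
      intervalModule_subsingleton (by push_cast; rw [hx]; exact fun h => (h.1.trans_lt hαγ).false)
    refine hFy (F.app_eq_zero_of_map_surjective hxy ?_ (Subsingleton.elim _ _))
    exact (intervalModule_map_bijective hxy hx.ge hyβ).2
  · by_contra! hβδ
    set z := β.toNNReal
    have hz : (z : ℝ) = β := Real.coe_toNNReal β (by linarith [y.2])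
    have hyz : y ≤ z := by rw [← NNReal.coe_le_coe, hz]; exact hyβ.le
    have : Subsingleton ((intervalModule α β).V z) :=
      intervalModule_subsingleton (by rw [hz]; exact fun h => h.2.false)
    refine hFy (F.app_eq_zero_of_map_injective hyz ?_ (Subsingleton.elim _ _))
    exact (intervalModule_map_bijective (add_le_add hyz le_rfl) (by push_cast; exact hγy)
      (by push_cast; linarith)).1

end intervalModuleHom

theorem homNeZero_intervalModule_shift_iff {α β γ δ : ℝ} {ε : ℝ≥0} (hα : 0 ≤ α) :
    HomNeZero (intervalModule α β) ((intervalModule γ δ).shift ε) ↔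
      γ ≤ α + ε ∧ α + ε < δ ∧ δ ≤ β + ε :=
  ⟨bounds_of_homNeZero_intervalModule_shift hα, fun ⟨hγ, hαδ, hδ⟩ =>
    homNeZero_intervalModule_shift hα hγ hαδ hδ⟩

theorem sset_intervalModule {α β γ δ : ℝ} (hα : 0 ≤ α) :
    Sset (intervalModule α β) (intervalModule γ δ) =
      Set.Ico (max 0 (max (γ - α) (δ - β))) (δ - α) := by
  ext x
  simp only [Sset, Set.mem_ofPred_eq, Set.mem_Ico, max_le_iff]
  refine ⟨fun ⟨hx, hH⟩ => ?_, fun ⟨⟨hx, hγ, hδ⟩, hαδ⟩ => ⟨hx, ?_⟩⟩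
  · rw [homNeZero_intervalModule_shift_iff hα, Real.coe_toNNReal x hx] at hH
    exact ⟨⟨hx, by linarith, by linarith⟩, by linarith⟩
  · rw [homNeZero_intervalModule_shift_iff hα, Real.coe_toNNReal x hx]
    exact ⟨by linarith, by linarith, by linarith⟩

theorem stmt17_general (a b c d : ℝ) (ha : 0 ≤ a) (hac : a ≤ c) (hdb : d ≤ b) :
    Sset (intervalModule a b) (intervalModule c d) = Set.Ico (c - a) (d - a) ∧
    Sset (intervalModule c d) (intervalModule a b) = Set.Ico (b - d) (b - c) := by
  rw [sset_intervalModule ha, sset_intervalModule (ha.trans hac),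
    max_eq_left (show d - b ≤ c - a by linarith), max_eq_right (show 0 ≤ c - a by linarith),
    max_eq_right (show a - c ≤ b - d by linarith), max_eq_right (show 0 ≤ b - d by linarith)]
  exact ⟨rfl, rfl⟩

theorem stmt17 (a b c d : ℝ) (ha : 0 ≤ a) (hac : a ≤ c) (hcd : c < d) (hdb : d ≤ b) :
    Sset (intervalModule a b) (intervalModule c d) = Set.Ico (c - a) (d - a) ∧
    Sset (intervalModule c d) (intervalModule a b) = Set.Ico (b - d) (b - c) :=
  stmt17_general a b c d ha hac hdb
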